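/- arXiv:math/0203060 — 11 statements merged into one kernel-verified Lean document; each statement's English description precedes it below -/
import Mathlib

section
/- Let A be a square matrix with nonnegative real entries. If A has an eigenvector f with strictly positive entries, then the corresponding eigenvalue is the largest nonnegative real eigenvalue of A (i.e., it dominates the absolute value of every eigenvalue of A). -/
/-!
Choose an index `i` at which `‖v i‖ / f i` is maximal, so that `‖v j‖ * f i ≤ ‖v i‖ * f j` for
all `j`. Reading the `i`-th row of `A v = μ v` through the triangle inequality and comparing
`|v|` with the multiple `(‖v i‖ / f i) • f` of the positive eigenvector gives
`‖μ‖ * ‖v i‖ ≤ lam * ‖v i‖`, and `v i ≠ 0`.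
-/

open Matrix

variable {ι : Type*} [Fintype ι] {𝕜 : Type*} [RCLike 𝕜]

theorem Matrix.norm_map_ofReal_mulVec_le {κ : Type*} {A : Matrix κ ι ℝ} (hA : ∀ i j, 0 ≤ A i j)
    (v : ι → 𝕜) (i : κ) :
    ‖(A.map ((↑) : ℝ → 𝕜) *ᵥ v) i‖ ≤ ∑ j, A i j * ‖v j‖ := by
  refine (norm_sum_le _ _).trans_eq (Finset.sum_congr rfl fun j _ => ?_)
  simp only [map_apply, norm_mul, RCLike.norm_ofReal, abs_of_nonneg (hA i j)]

theorem exists_norm_mul_le_norm_mul {v : ι → 𝕜} (hv : v ≠ 0) {f : ι → ℝ} (hf : ∀ i, 0 < f i) :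
    ∃ i, v i ≠ 0 ∧ ∀ j, ‖v j‖ * f i ≤ ‖v i‖ * f j := by
  obtain ⟨j₀, hj₀⟩ := Function.ne_iff.mp hv
  have : Nonempty ι := ⟨j₀⟩
  obtain ⟨i, hi⟩ := Finite.exists_max fun j => ‖v j‖ / f j
  have hle : ∀ j, ‖v j‖ * f i ≤ ‖v i‖ * f j := fun j => by
    simpa only [div_le_div_iff₀ (hf j) (hf i)] using hi j
  refine ⟨i, fun hvi => hj₀ ?_, hle⟩
  have := hle j₀
  rw [hvi, norm_zero, zero_mul] at this
  exact norm_le_zero_iff.mp (nonpos_of_mul_nonpos_left this (hf i))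

theorem norm_le_of_mulVec_eq_smul_of_pos {A : Matrix ι ι ℝ} (hA : ∀ i j, 0 ≤ A i j)
    {f : ι → ℝ} (hf : ∀ i, 0 < f i) {lam : ℝ} (hfA : A *ᵥ f = lam • f)
    {μ : 𝕜} {v : ι → 𝕜} (hv : v ≠ 0) (hvA : A.map ((↑) : ℝ → 𝕜) *ᵥ v = μ • v) :
    ‖μ‖ ≤ lam := by
  obtain ⟨i, hvi, hmax⟩ := exists_norm_mul_le_norm_mul hv hf
  have hrow : ∑ j, A i j * f j = lam * f i := by
    simpa [mulVec, dotProduct] using congrFun hfA i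
  have key : ‖μ‖ * (‖v i‖ * f i) ≤ lam * (‖v i‖ * f i) := calc
    ‖μ‖ * (‖v i‖ * f i) = ‖(A.map ((↑) : ℝ → 𝕜) *ᵥ v) i‖ * f i := by
      rw [hvA, Pi.smul_apply, norm_smul, mul_assoc]
    _ ≤ (∑ j, A i j * ‖v j‖) * f i :=
      mul_le_mul_of_nonneg_right (norm_map_ofReal_mulVec_le hA v i) (hf i).le
    _ ≤ ∑ j, A i j * (‖v i‖ * f j) := by
      rw [Finset.sum_mul]
      refine Finset.sum_le_sum fun j _ => ?_
      rw [mul_assoc]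
      exact mul_le_mul_of_nonneg_left (hmax j) (hA i j)
    _ = lam * (‖v i‖ * f i) := by
      simp_rw [mul_left_comm (A i _), ← Finset.mul_sum, hrow]
      ring
  exact le_of_mul_le_mul_right key (mul_pos (norm_pos_iff.mpr hvi) (hf i))

/-- Frobenius-Perron theorem, part (3): if a nonnegative square real matrix `A` has an
eigenvector `f` with strictly positive entries and eigenvalue `lam`, then `lam` dominates
the absolute value of every (complex) eigenvalue of `A`. -/
theorem stmt0 (n : ℕ) (A : Matrix (Fin n) (Fin n) ℝ)
    (hA : ∀ i j, 0 ≤ A i j)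
    (f : Fin n → ℝ) (hf : ∀ i, 0 < f i)
    (lam : ℝ) (heig : A.mulVec f = lam • f) :
    ∀ μ : ℂ, (∃ v : Fin n → ℂ, v ≠ 0 ∧
        (A.map (fun x : ℝ => (x : ℂ))).mulVec v = μ • v) →
      ‖μ‖ ≤ lam :=
  fun _ ⟨_, hv, hvA⟩ => norm_le_of_mulVec_eq_smul_of_pos hA hf heig hv hvA
end

section
/- Let A be a finite-rank unital ring that is free as a ℤ-module with basis (b_i) such that all structure constants N_{ij}^k (defined by b_i b_j = Σ_k N_{ij}^k b_k) are nonnegative. If φ, ψ : A → ℝ are ring homomorphisms with φ(b_i) > 0 and ψ(b_i) > 0 for all i, then φ = ψ. -/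
/-!
Choose a basis element `b i` maximising the ratio `M = φ(b i) / ψ(b i)`. Since the structure
constants are nonnegative, `φ(b i) φ(b j) = ∑ N_{ij}^k φ(b k) ≤ M ∑ N_{ij}^k ψ(b k) = φ(b i) ψ(b j)`,
so `φ ≤ ψ` on the basis; by symmetry `φ = ψ` on the basis, hence everywhere.
-/

namespace Module.Basis

variable {A : Type*} [Ring A] {ι : Type*} [Fintype ι] {K F : Type*}

lemma map_eq_sum_repr_mul [Ring K] [FunLike F A K] [AddMonoidHomClass F A K]
    (b : Basis ι ℤ A) (f : F) (a : A) :
    f a = ∑ k, (b.repr a k : K) * f (b k) := by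
  conv_lhs => rw [← b.sum_repr a]
  rw [map_sum]
  exact Finset.sum_congr rfl fun k _ => by rw [map_zsmul, zsmul_eq_mul]

variable [Field K] [LinearOrder K] [IsStrictOrderedRing K]

lemma map_le_mul_of_repr_nonneg [FunLike F A K] [AddMonoidHomClass F A K]
    (b : Basis ι ℤ A) (φ ψ : F) {M : K} (hM : ∀ k, φ (b k) ≤ M * ψ (b k)) {a : A}
    (ha : ∀ k, 0 ≤ b.repr a k) : φ a ≤ M * ψ a := by
  rw [b.map_eq_sum_repr_mul φ, b.map_eq_sum_repr_mul ψ, Finset.mul_sum]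
  refine Finset.sum_le_sum fun k _ => ?_
  calc (b.repr a k : K) * φ (b k) ≤ b.repr a k * (M * ψ (b k)) :=
        mul_le_mul_of_nonneg_left (hM k) (by exact_mod_cast ha k)
    _ = M * (b.repr a k * ψ (b k)) := by ring

lemma ringHom_apply_le (b : Basis ι ℤ A) (hstruct : ∀ i j k, 0 ≤ b.repr (b i * b j) k)
    (φ ψ : A →+* K) (hφ : ∀ i, 0 < φ (b i)) (hψ : ∀ i, 0 < ψ (b i)) (j : ι) :
    φ (b j) ≤ ψ (b j) := by
  have : Nonempty ι := ⟨j⟩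
  obtain ⟨i, hi⟩ := Finite.exists_max fun i => φ (b i) / ψ (b i)
  set M := φ (b i) / ψ (b i)
  have hM : ∀ k, φ (b k) ≤ M * ψ (b k) := fun k => (div_le_iff₀ (hψ k)).mp (hi k)
  have hMi : M * ψ (b i) = φ (b i) := div_mul_cancel₀ _ (hψ i).ne'
  have key : φ (b i) * φ (b j) ≤ φ (b i) * ψ (b j) := by
    calc φ (b i) * φ (b j) = φ (b i * b j) := (map_mul φ _ _).symm
      _ ≤ M * ψ (b i * b j) := b.map_le_mul_of_repr_nonneg φ ψ hM (hstruct i j)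
      _ = φ (b i) * ψ (b j) := by rw [map_mul, ← mul_assoc, hMi]
  exact le_of_mul_le_mul_left key (hφ i)

end Module.Basis

theorem stmt1_general (A : Type*) [Ring A] (ι : Type*) [Fintype ι]
    (b : Module.Basis ι ℤ A)
    (hstruct : ∀ i j k, 0 ≤ b.repr (b i * b j) k)
    (φ ψ : A →+* ℝ)
    (hφ : ∀ i, 0 < φ (b i)) (hψ : ∀ i, 0 < ψ (b i)) :
    φ = ψ := by
  have hbasis : ∀ j, φ (b j) = ψ (b j) := fun j =>
    (b.ringHom_apply_le hstruct φ ψ hφ hψ j).antisymm (b.ringHom_apply_le hstruct ψ φ hψ hφ j)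
  ext a
  rw [b.map_eq_sum_repr_mul φ, b.map_eq_sum_repr_mul ψ]
  simp only [hbasis]

/-- Uniqueness of the positive character of a ℤ₊-ring: if `A` is a unital ring, free of
finite rank over ℤ with basis `b` containing `1` and nonnegative structure constants, and
`φ, ψ : A → ℝ` are ring homomorphisms positive on every basis element, then `φ = ψ`. -/
theorem stmt1 (A : Type*) [Ring A] (ι : Type*) [Fintype ι]
    (b : Module.Basis ι ℤ A) (i0 : ι) (hone : b i0 = 1)
    (hstruct : ∀ i j k, 0 ≤ b.repr (b i * b j) k)
    (φ ψ : A →+* ℝ)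
    (hφ : ∀ i, 0 < φ (b i)) (hψ : ∀ i, 0 < ψ (b i)) :
    φ = ψ :=
  stmt1_general A ι b hstruct φ ψ hφ hψ
end

section
/- Let A be a unital based ring of finite rank with basis (b_i), involution i ↦ i*, and structure constants N_{ij}^k satisfying N_{ri}^k = N_{k*r}^{i*}. Then for each j, the element z_j = Σ_i b_i b_j b_{i*} is central in A. -/
/-!
Expanding `b r * b i` and `b (σ i) * b r` in the basis writes both `b r * z` and `z * b r`
as combinations of the elements `b k * y * b l`, with coefficients `N_{ri}^k` (at `l = σ i`)
and `N_{σ(k) r}^l` respectively. Frobenius reciprocity `N_{ri}^k = N_{σ(k) r}^{σ(i)}` says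
exactly that these coefficients agree, so `z = ∑ i, b i * y * b (σ i)` commutes with every
basis element, hence is central, for any `y`.
-/

namespace Module.Basis

variable {R A ι : Type*} [CommSemiring R] [Semiring A] [Module R A] (b : Basis ι R A)

theorem commute_of_forall_commute_basis [IsScalarTower R A A] [SMulCommClass R A A] {z : A}
    (h : ∀ r, Commute (b r) z) (x : A) : Commute x z :=
  LinearMap.congr_fun (b.ext fun r => (h r).eq :
    LinearMap.mulRight R z = LinearMap.mulLeft R z) x

theorem basis_mul_sum_conj [IsScalarTower R A A] [Fintype ι] (σ : ι → ι) (y : A) (r : ι) :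
    b r * ∑ i, b i * y * b (σ i) = ∑ i, ∑ k, b.repr (b r * b i) k • (b k * y * b (σ i)) := by
  rw [Finset.mul_sum]
  refine Finset.sum_congr rfl fun i _ => ?_
  conv_lhs => rw [← mul_assoc, ← mul_assoc, ← b.sum_repr (b r * b i)]
  simp only [Finset.sum_mul, smul_mul_assoc]

theorem sum_conj_mul_basis [SMulCommClass R A A] [Fintype ι] (σ : ι → ι) (y : A) (r : ι) :
    (∑ i, b i * y * b (σ i)) * b r = ∑ i, ∑ k, b.repr (b (σ i) * b r) k • (b i * y * b k) := by
  rw [Finset.sum_mul]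
  refine Finset.sum_congr rfl fun i _ => ?_
  conv_lhs => rw [mul_assoc, ← b.sum_repr (b (σ i) * b r)]
  simp only [Finset.mul_sum, mul_smul_comm, mul_assoc]

theorem commute_basis_sum_conj [IsScalarTower R A A] [SMulCommClass R A A] [Fintype ι]
    {σ : ι → ι} (hσ : Function.Involutive σ)
    (hfrob : ∀ r i k, b.repr (b r * b i) k = b.repr (b (σ k) * b r) (σ i)) (y : A) (r : ι) :
    Commute (b r) (∑ i, b i * y * b (σ i)) := by
  calc b r * ∑ i, b i * y * b (σ i)
      = ∑ k, ∑ i, b.repr (b (σ k) * b r) (σ i) • (b k * y * b (σ i)) := by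
        rw [basis_mul_sum_conj, Finset.sum_comm]
        simp only [hfrob r]
    _ = ∑ k, ∑ i, b.repr (b (σ k) * b r) i • (b k * y * b i) :=
        Finset.sum_congr rfl fun k _ => Fintype.sum_equiv hσ.toPerm _ _ fun _ => rfl
    _ = (∑ i, b i * y * b (σ i)) * b r := (sum_conj_mul_basis b σ y r).symm

end Module.Basis

theorem stmt2_general (A : Type*) [Ring A] (ι : Type*) [Fintype ι]
    (b : Module.Basis ι ℤ A)
    (σ : ι → ι) (hσ : ∀ i, σ (σ i) = i)
    (hfrob : ∀ r i k, b.repr (b r * b i) k = b.repr (b (σ k) * b r) (σ i))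
    (j : ι) :
    ∀ x : A, x * (∑ i, b i * b j * b (σ i)) = (∑ i, b i * b j * b (σ i)) * x :=
  fun x => (b.commute_of_forall_commute_basis (b.commute_basis_sum_conj hσ hfrob (b j)) x).eq

/-- In a unital based ring of finite rank with basis `b`, involution `σ` on indices and
structure constants satisfying Frobenius reciprocity `N_{ri}^k = N_{σ(k) r}^{σ(i)}`, the
element `z_j = ∑ i, b i * b j * b (σ i)` is central. -/
theorem stmt2 (A : Type*) [Ring A] (ι : Type*) [Fintype ι] [DecidableEq ι]
    (b : Module.Basis ι ℤ A) (i0 : ι) (hone : b i0 = 1)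
    (σ : ι → ι) (hσ : ∀ i, σ (σ i) = i)
    (hnn : ∀ i j k, 0 ≤ b.repr (b i * b j) k)
    (hdual : ∀ i j, b.repr (b i * b j) i0 = if j = σ i then 1 else 0)
    (hfrob : ∀ r i k, b.repr (b r * b i) k = b.repr (b (σ k) * b r) (σ i))
    (j : ι) :
    ∀ x : A, x * (∑ i, b i * b j * b (σ i)) = (∑ i, b i * b j * b (σ i)) * x :=
  stmt2_general A ι b σ hσ hfrob j
end

section
/- Let A be a unital based ring of finite rank with basis (b_i). The assignment b_i ↦ λ_i, where λ_i is the largest nonnegative real eigenvalue of the matrix of left multiplication by b_i in the basis (b_j), extends to a ring homomorphism A → ℝ. -/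
/-!
Let `z` be the sum of all basis elements. The matrix `R` of right multiplication by `z` has
positive entries: `b k` occurs in `b j * b p` for some `p`, because `1` occurs in `b j * b j*`.
By Perron–Frobenius, `R` has a positive eigenvector `v` whose eigenspace is a line. Left
multiplications commute with `R`, so they preserve this line: `v` is a common eigenvector of all
`[x]`, and `x ↦` (eigenvalue of `[x]` on `v`) is a ring homomorphism. As `[b i]` is nonnegative and
`v` is positive, its eigenvalue on `v` bounds the absolute value of every real eigenvalue of
`[b i]`, hence equals `λ i`.
-/

open Finset Filter Matrix

theorem ne_zero_of_mem_stdSimplex {𝕜 ι : Type*} [Semiring 𝕜] [PartialOrder 𝕜] [Nontrivial 𝕜]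
    [Fintype ι] {x : ι → 𝕜} (hx : x ∈ stdSimplex 𝕜 ι) : x ≠ 0 := by
  rintro rfl
  simpa using hx.2

namespace Matrix

variable {ι : Type*} [Fintype ι]

theorem mulVec_apply_pos {R : Matrix ι ι ℝ} (hR : ∀ k j, 0 < R k j) {w : ι → ℝ} (hw : 0 ≤ w)
    (hw0 : w ≠ 0) (k : ι) : 0 < (R *ᵥ w) k := by
  obtain ⟨j, hj⟩ := Function.ne_iff.mp hw0
  exact sum_pos' (fun j _ => mul_nonneg (hR k j).le (hw j))
    ⟨j, mem_univ j, mul_pos (hR k j) ((hw j).lt_of_ne' hj)⟩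

theorem exists_eq_smul_of_mulVec_eq_smul {R : Matrix ι ι ℝ} (hR : ∀ k j, 0 < R k j)
    {t : ℝ} {v w : ι → ℝ} (hv : ∀ k, 0 < v k) (hRv : R *ᵥ v = t • v)
    (hRw : R *ᵥ w = t • w) : ∃ c : ℝ, w = c • v := by
  by_cases hw0 : w = 0
  · exact ⟨0, by simp [hw0]⟩
  obtain ⟨k, -⟩ := Function.ne_iff.mp hw0
  obtain ⟨m, -, hm⟩ := univ.exists_min_image (fun k => w k / v k) ⟨k, mem_univ k⟩
  set c := w m / v m
  -- `w - c • v` is a nonnegative eigenvector vanishing at `m`, which positivity of `R` forbids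
  -- unless it is zero.
  have hcv : c • v ≤ w := fun j => (le_div_iff₀ (hv j)).1 (hm j (mem_univ j))
  have hu : R *ᵥ (w - c • v) = t • (w - c • v) := by
    rw [mulVec_sub, mulVec_smul, hRw, hRv, smul_sub, smul_comm]
  have hum : (w - c • v) m = 0 := by simp [c, div_mul_cancel₀ _ (hv m).ne']
  have hu0 : w - c • v = 0 := by
    by_contra hne
    have := mulVec_apply_pos hR (sub_nonneg.2 hcv) hne m
    rw [hu, Pi.smul_apply, hum, smul_zero] at this
    exact lt_irrefl _ this
  exact ⟨c, sub_eq_zero.1 hu0⟩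

theorem abs_le_of_mulVec_eq_smul {M : Matrix ι ι ℝ} (hM : ∀ k j, 0 ≤ M k j) {d t : ℝ}
    {v w : ι → ℝ} (hv : ∀ k, 0 < v k) (hMv : M *ᵥ v = d • v) (hw : w ≠ 0)
    (hMw : M *ᵥ w = t • w) : |t| ≤ d := by
  obtain ⟨k, hk⟩ := Function.ne_iff.mp hw
  obtain ⟨m, -, hm⟩ := univ.exists_max_image (fun k => |w k| / v k) ⟨k, mem_univ k⟩
  set c := |w m| / v m
  have hwc : ∀ j, |w j| ≤ c * v j := fun j => (div_le_iff₀ (hv j)).1 (hm j (mem_univ j))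
  have hwm : 0 < |w m| := by
    have : 0 < c := (div_pos (abs_pos.2 hk) (hv k)).trans_le (hm k (mem_univ k))
    simpa [c, div_mul_cancel₀ _ (hv m).ne'] using mul_pos this (hv m)
  refine le_of_mul_le_mul_right ?_ hwm
  calc |t| * |w m| = |(M *ᵥ w) m| := by rw [hMw, Pi.smul_apply, smul_eq_mul, abs_mul]
    _ ≤ ∑ j, M m j * |w j| := by
      refine (abs_sum_le_sum_abs _ _).trans_eq (sum_congr rfl fun j _ => ?_)
      rw [abs_mul, abs_of_nonneg (hM m j)]
    _ ≤ ∑ j, M m j * (c * v j) := sum_le_sum fun j _ => mul_le_mul_of_nonneg_left (hwc j) (hM m j)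
    _ = c * (M *ᵥ v) m := by
      simp only [mulVec, dotProduct, mul_sum]
      exact sum_congr rfl fun j _ => by ring
    _ = d * |w m| := by
      rw [hMv, Pi.smul_apply, smul_eq_mul, mul_left_comm, div_mul_cancel₀ _ (hv m).ne']

theorem isGreatest_of_mulVec_eq_smul [Nonempty ι] {M : Matrix ι ι ℝ} (hM : ∀ k j, 0 ≤ M k j)
    {d : ℝ} {v : ι → ℝ} (hv : ∀ k, 0 < v k) (hMv : M *ᵥ v = d • v) :
    IsGreatest {t : ℝ | 0 ≤ t ∧ ∃ w : ι → ℝ, w ≠ 0 ∧ M *ᵥ w = t • w} d := by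
  obtain ⟨k⟩ := ‹Nonempty ι›
  refine ⟨⟨?_, v, fun h => (hv k).ne' (congrFun h k), hMv⟩, fun t ⟨_, w, hw, hMw⟩ => ?_⟩
  · have : 0 ≤ (M *ᵥ v) k := sum_nonneg fun j _ => mul_nonneg (hM k j) (hv j).le
    rw [hMv, Pi.smul_apply, smul_eq_mul] at this
    exact nonneg_of_mul_nonneg_left this (hv k)
  · exact (le_abs_self t).trans (abs_le_of_mulVec_eq_smul hM hv hMv hw hMw)

/-- Maximizing `t` over this compact set produces the Perron eigenvalue. -/
def collatzWielandtSet (R : Matrix ι ι ℝ) : Set (ℝ × (ι → ℝ)) :=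
  {p | 0 ≤ p.1 ∧ p.2 ∈ stdSimplex ℝ ι ∧ p.1 • p.2 ≤ R *ᵥ p.2}

variable {R : Matrix ι ι ℝ}

theorem le_sum_of_mem_collatzWielandtSet (hR : ∀ k j, 0 ≤ R k j) {p : ℝ × (ι → ℝ)}
    (hp : p ∈ R.collatzWielandtSet) : p.1 ≤ ∑ k, ∑ j, R k j := by
  obtain ⟨t, x⟩ := p
  obtain ⟨-, hx, hle⟩ := hp
  calc t = ∑ k, t * x k := by rw [← mul_sum, hx.2, mul_one]
    _ ≤ ∑ k, (R *ᵥ x) k := sum_le_sum fun k _ => hle k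
    _ ≤ ∑ k, ∑ j, R k j := sum_le_sum fun k _ => sum_le_sum fun j _ =>
      mul_le_of_le_one_right (hR k j) (mem_Icc_of_mem_stdSimplex hx j).2

theorem isCompact_collatzWielandtSet (hR : ∀ k j, 0 ≤ R k j) :
    IsCompact R.collatzWielandtSet := by
  refine (isCompact_Icc.prod (isCompact_stdSimplex ℝ ι)).of_isClosed_subset ?_
    fun p hp => ⟨⟨hp.1, le_sum_of_mem_collatzWielandtSet hR hp⟩, hp.2.1⟩
  exact (isClosed_le continuous_const continuous_fst).inter
    (((isClosed_stdSimplex ℝ ι).preimage continuous_snd).inter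
      (isClosed_le (continuous_fst.smul continuous_snd)
        (continuous_const.matrix_mulVec continuous_snd)))

theorem collatzWielandtSet_nonempty [Nonempty ι] (hR : ∀ k j, 0 ≤ R k j) :
    R.collatzWielandtSet.Nonempty := by
  classical
  obtain ⟨i⟩ := ‹Nonempty ι›
  have hx := single_mem_stdSimplex ℝ i
  exact ⟨(0, Pi.single i 1), le_rfl, hx, fun k => by simpa using hR k i⟩

theorem exists_mem_collatzWielandtSet_gt (hR : ∀ k j, 0 < R k j) {p : ℝ × (ι → ℝ)}
    (hp : p ∈ R.collatzWielandtSet) (hne : R *ᵥ p.2 ≠ p.1 • p.2) :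
    ∃ q ∈ R.collatzWielandtSet, p.1 < q.1 := by
  obtain ⟨t, x⟩ := p
  obtain ⟨ht, hx, hle⟩ := hp
  set y := R *ᵥ x
  have hy : ∀ k, 0 < y k := mulVec_apply_pos hR hx.1 (ne_zero_of_mem_stdSimplex hx)
  -- `R *ᵥ y - t • y = R *ᵥ (y - t • x)` is strictly positive, so `t` can be increased for `y`.
  have hlt : ∀ k, t * y k < (R *ᵥ y) k := by
    intro k
    have := mulVec_apply_pos hR (sub_nonneg.2 hle) (sub_ne_zero.2 hne) k
    rw [mulVec_sub, mulVec_smul] at this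
    simpa [sub_pos] using this
  obtain ⟨ε, hε, hεy⟩ : ∃ ε, 0 < ε ∧ ∀ k, (t + ε) * y k < (R *ᵥ y) k :=
    (eventually_all.2 fun k => (((continuous_const.add continuous_id).mul
      continuous_const).tendsto' 0 _ (by simp [y])).eventually (gt_mem_nhds (hlt k))).exists_gt
  set s := ∑ k, y k
  have hs : 0 < s :=
    sum_pos (fun k _ => hy k) (univ.nonempty_of_sum_ne_zero (by rw [hx.2]; exact one_ne_zero))
  refine ⟨(t + ε, s⁻¹ • y), ⟨add_nonneg ht hε.le, ⟨fun k => ?_, ?_⟩, ?_⟩,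
    lt_add_of_pos_right t hε⟩
  · exact smul_nonneg (inv_nonneg.2 hs.le) (hy k).le
  · simp only [Pi.smul_apply, smul_eq_mul, ← mul_sum, inv_mul_cancel₀ hs.ne', s]
  · rw [mulVec_smul, smul_comm]
    exact smul_le_smul_of_nonneg_left (fun k => (hεy k).le) (inv_nonneg.2 hs.le)

theorem exists_pos_mulVec_eq_smul [Nonempty ι] (hR : ∀ k j, 0 < R k j) :
    ∃ (t : ℝ) (v : ι → ℝ), (∀ k, 0 < v k) ∧ R *ᵥ v = t • v := by
  have hR' k j : 0 ≤ R k j := (hR k j).le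
  obtain ⟨⟨t, x⟩, hp, hmax⟩ := (isCompact_collatzWielandtSet hR').exists_isMaxOn
    (collatzWielandtSet_nonempty hR') continuous_fst.continuousOn
  have hRx : R *ᵥ x = t • x := by
    by_contra hne
    obtain ⟨q, hq, hlt⟩ := exists_mem_collatzWielandtSet_gt hR hp hne
    exact (hmax hq).not_gt hlt
  refine ⟨t, x, fun k => ?_, hRx⟩
  have := mulVec_apply_pos hR hp.2.1.1 (ne_zero_of_mem_stdSimplex hp.2.1) k
  rw [hRx, Pi.smul_apply, smul_eq_mul] at this
  exact pos_of_mul_pos_right this hp.1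

theorem exists_mulVec_eq_smul_of_commute (hR : ∀ k j, 0 < R k j) {t : ℝ} {v : ι → ℝ}
    (hv : ∀ k, 0 < v k) (hRv : R *ᵥ v = t • v) {N : Matrix ι ι ℝ} (hNR : N * R = R * N) :
    ∃ c : ℝ, N *ᵥ v = c • v :=
  exists_eq_smul_of_mulVec_eq_smul hR hv hRv
    (by rw [mulVec_mulVec, ← hNR, ← mulVec_mulVec, hRv, mulVec_smul])

end Matrix

theorem Module.Basis.exists_mulVec_eq_smul {ι n K A : Type*} [Fintype n] [Ring K]
    [AddCommGroup A] (b : Module.Basis ι ℤ A) (ρ : A →+ Matrix n n K) {v : n → K}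
    (h : ∀ i, ∃ c : K, ρ (b i) *ᵥ v = c • v) (x : A) : ∃ c : K, ρ x *ᵥ v = c • v := by
  induction b.mem_span x using Submodule.span_induction with
  | mem _ hx =>
    obtain ⟨i, rfl⟩ := hx
    exact h i
  | zero => exact ⟨0, by simp⟩
  | add x y _ _ hx hy =>
    obtain ⟨c, hc⟩ := hx
    obtain ⟨d, hd⟩ := hy
    exact ⟨c + d, by rw [map_add, Matrix.add_mulVec, hc, hd, add_smul]⟩
  | smul m x _ hx =>
    obtain ⟨c, hc⟩ := hx
    exact ⟨m • c, by rw [map_zsmul, Matrix.smul_mulVec, hc, smul_assoc]⟩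

theorem Matrix.exists_ringHom_mulVec_eq_smul {ι K A : Type*} [Fintype ι] [DecidableEq ι]
    [CommRing K] [IsDomain K] [Ring A] (ρ : A →+* Matrix ι ι K) {v : ι → K} (hv : v ≠ 0)
    (h : ∀ x, ∃ c : K, ρ x *ᵥ v = c • v) : ∃ χ : A →+* K, ∀ x, ρ x *ᵥ v = χ x • v := by
  choose χ hχ using h
  have hinj : ∀ {c d : K}, c • v = d • v → c = d := fun e => smul_left_injective K hv e
  refine ⟨
    { toFun := χ
      map_one' := hinj (by rw [← hχ, map_one, one_mulVec, one_smul])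
      map_mul' := fun x y => hinj (by
        rw [← hχ, map_mul, ← mulVec_mulVec, hχ, mulVec_smul, hχ, smul_smul, mul_comm])
      map_zero' := hinj (by rw [← hχ, map_zero, zero_mulVec, zero_smul])
      map_add' := fun x y => hinj (by rw [← hχ, map_add, add_mulVec, hχ, hχ, add_smul]) }, hχ⟩

namespace Module.Basis

variable {ι A : Type*} [Fintype ι] [Ring A] (b : Module.Basis ι ℤ A)

theorem repr_mul_eq_sum_repr_left (x y : A) (k : ι) :
    b.repr (x * y) k = ∑ m, b.repr x m * b.repr (b m * y) k := by
  conv_lhs => rw [← b.sum_repr x]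
  simp only [sum_mul, smul_mul_assoc, map_sum, map_smul, Finsupp.coe_finsetSum,
    Finset.sum_apply, Finsupp.smul_apply, smul_eq_mul]

theorem repr_mul_eq_sum_repr_right (x y : A) (k : ι) :
    b.repr (x * y) k = ∑ m, b.repr (x * b m) k * b.repr y m := by
  conv_lhs => rw [← b.sum_repr y]
  simp only [mul_sum, mul_smul_comm, map_sum, map_smul, Finsupp.coe_finsetSum,
    Finset.sum_apply, Finsupp.smul_apply, smul_eq_mul, mul_comm]

variable {b}

theorem exists_repr_mul_pos {i0 : ι} (hone : b i0 = 1)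
    (hnn : ∀ i j k, 0 ≤ b.repr (b i * b j) k) (hunit : ∀ j, ∃ j', 0 < b.repr (b j * b j') i0)
    (j k : ι) : ∃ p, 0 < b.repr (b j * b p) k := by
  obtain ⟨j', hj'⟩ := hunit j
  -- `b k` occurs in `(b j * b j') * b k` through the summand `b i0 * b k`, so some `b p`
  -- occurring in `b j' * b k` has `b k` occurring in `b j * b p`.
  have h : 0 < b.repr (b j * b j' * b k) k :=
    calc 0 < b.repr (b j * b j') i0 * b.repr (b i0 * b k) k := by
          simpa [hone] using hj'
      _ ≤ ∑ m, b.repr (b j * b j') m * b.repr (b m * b k) k :=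
          single_le_sum (fun m _ => mul_nonneg (hnn _ _ _) (hnn _ _ _)) (mem_univ i0)
      _ = _ := (b.repr_mul_eq_sum_repr_left _ _ _).symm
  rw [mul_assoc, repr_mul_eq_sum_repr_right, ← sum_const_zero] at h
  obtain ⟨p, -, hp⟩ := exists_lt_of_sum_lt h
  exact ⟨p, pos_of_mul_pos_left hp (hnn _ _ _)⟩

variable [DecidableEq ι] (b)

noncomputable def realLeftMulMatrix : A →+* Matrix ι ι ℝ :=
  (Int.castRingHom ℝ).mapMatrix.comp (Algebra.leftMulMatrix b).toRingHom

noncomputable def realRightMulMatrix (z : A) : Matrix ι ι ℝ :=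
  (Int.castRingHom ℝ).mapMatrix (LinearMap.toMatrixAlgEquiv b (LinearMap.mulRight ℤ z))

theorem realLeftMulMatrix_apply (x : A) (k j : ι) :
    b.realLeftMulMatrix x k j = b.repr (x * b j) k := by
  simp [realLeftMulMatrix, Algebra.leftMulMatrix_eq_repr_mul]

theorem realRightMulMatrix_apply (z : A) (k j : ι) :
    b.realRightMulMatrix z k j = b.repr (b j * z) k := by
  simp [realRightMulMatrix, LinearMap.toMatrixAlgEquiv_apply]

theorem commute_realLeftMulMatrix_realRightMulMatrix (x z : A) :
    Commute (b.realLeftMulMatrix x) (b.realRightMulMatrix z) :=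
  ((LinearMap.commute_mulLeft_right x z).map (LinearMap.toMatrixAlgEquiv b)).map
    (Int.castRingHom ℝ).mapMatrix

variable {b}

theorem realRightMulMatrix_sum_pos {i0 : ι} (hone : b i0 = 1)
    (hnn : ∀ i j k, 0 ≤ b.repr (b i * b j) k) (hunit : ∀ j, ∃ j', 0 < b.repr (b j * b j') i0)
    (k j : ι) : 0 < b.realRightMulMatrix (∑ p, b p) k j := by
  obtain ⟨p, hp⟩ := exists_repr_mul_pos hone hnn hunit j k
  rw [realRightMulMatrix_apply, mul_sum, map_sum, Finsupp.coe_finsetSum, Finset.sum_apply]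
  exact_mod_cast hp.trans_le (single_le_sum (fun q _ => hnn j q k) (mem_univ p))

end Module.Basis

theorem stmt3_general (A : Type*) [Ring A] (ι : Type*) [Fintype ι] [DecidableEq ι]
    (b : Module.Basis ι ℤ A) (i0 : ι) (hone : b i0 = 1)
    (σ : ι → ι)
    (hnn : ∀ i j k, 0 ≤ b.repr (b i * b j) k)
    (hdual : ∀ i j, b.repr (b i * b j) i0 = if j = σ i then 1 else 0)
    -- the left-multiplication matrix of `b i` (row `k`, column `j`)
    (M : ι → Matrix ι ι ℝ) (hM : ∀ i k j, M i k j = (b.repr (b i * b j) k : ℤ))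
    -- `lam i` is the largest nonnegative real eigenvalue of `M i`
    (lam : ι → ℝ)
    (hlam : ∀ i, lam i ∈ {t : ℝ | 0 ≤ t ∧ ∃ v : ι → ℝ, v ≠ 0 ∧ (M i).mulVec v = t • v} ∧
      ∀ t ∈ {t : ℝ | 0 ≤ t ∧ ∃ v : ι → ℝ, v ≠ 0 ∧ (M i).mulVec v = t • v}, t ≤ lam i) :
    ∃ φ : A →+* ℝ, ∀ i, φ (b i) = lam i := by
  have : Nonempty ι := ⟨i0⟩
  set ρ := b.realLeftMulMatrix
  have hMρ : ∀ i, M i = ρ (b i) := fun i => by ext k j; rw [hM, b.realLeftMulMatrix_apply]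
  have hρ : ∀ i k j, 0 ≤ ρ (b i) k j := fun i k j => by
    rw [b.realLeftMulMatrix_apply]; exact_mod_cast hnn i j k
  have hR := b.realRightMulMatrix_sum_pos hone hnn fun j => ⟨σ j, by simp [hdual]⟩
  obtain ⟨t, v, hv, hRv⟩ := Matrix.exists_pos_mulVec_eq_smul hR
  have hcommon : ∀ i, ∃ c, ρ (b i) *ᵥ v = c • v := fun i =>
    Matrix.exists_mulVec_eq_smul_of_commute hR hv hRv
      (b.commute_realLeftMulMatrix_realRightMulMatrix _ _).eq
  have hv0 : v ≠ 0 := fun h => (hv i0).ne' (congrFun h i0)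
  obtain ⟨χ, hχ⟩ := Matrix.exists_ringHom_mulVec_eq_smul ρ hv0
    (b.exists_mulVec_eq_smul ρ.toAddMonoidHom hcommon)
  refine ⟨χ, fun i => (Matrix.isGreatest_of_mulVec_eq_smul (hρ i) hv (hχ (b i))).unique ?_⟩
  have h := hlam i
  rw [hMρ i] at h
  exact h

/-- In a unital based ring of finite rank (Lusztig), the assignment sending each basis
element `b i` to the largest nonnegative real eigenvalue of its left-multiplication matrix
extends to a ring homomorphism `A → ℝ`. -/
theorem stmt3 (A : Type*) [Ring A] (ι : Type*) [Fintype ι] [DecidableEq ι]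
    (b : Module.Basis ι ℤ A) (i0 : ι) (hone : b i0 = 1)
    (σ : ι → ι) (hσ : ∀ i, σ (σ i) = i)
    (hnn : ∀ i j k, 0 ≤ b.repr (b i * b j) k)
    (hdual : ∀ i j, b.repr (b i * b j) i0 = if j = σ i then 1 else 0)
    -- the left-multiplication matrix of `b i` (row `k`, column `j`)
    (M : ι → Matrix ι ι ℝ) (hM : ∀ i k j, M i k j = (b.repr (b i * b j) k : ℤ))
    -- `lam i` is the largest nonnegative real eigenvalue of `M i`
    (lam : ι → ℝ)
    (hlam : ∀ i, lam i ∈ {t : ℝ | 0 ≤ t ∧ ∃ v : ι → ℝ, v ≠ 0 ∧ (M i).mulVec v = t • v} ∧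
      ∀ t ∈ {t : ℝ | 0 ≤ t ∧ ∃ v : ι → ℝ, v ≠ 0 ∧ (M i).mulVec v = t • v}, t ≤ lam i) :
    ∃ φ : A →+* ℝ, ∀ i, φ (b i) = lam i :=
  stmt3_general A ι b i0 hone σ hnn hdual M hM lam hlam
end

section
/- Let (N_i)_{i∈I} be the multiplication matrices of a fusion ring over ℂ with duality involution * satisfying N_i^T = N_{i*}, and suppose (d_i) is a common eigenvector: N_i d = (s_{im}/s_{0m}) d for some column v_m of a symmetric matrix S with S² the permutation matrix of *. If |v_m|² ≠ 0, then s_{i*m} = conjugate(s_{im}) for all i. Consequently the S-matrix of a modular category over ℂ is unitary. -/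
/-!
The column `v = v_m` is a common eigenvector of the real matrices `N_i`, with eigenvalues
`λ_i = s_{im}/s_{0m}`. Since `N_{i*} = N_iᵀ = N_iᴴ`, computing `⟪v, N_i v⟫` in two ways gives
`λ_{i*} = conj λ_i`, i.e. `s_{i*m} conj s_{0m} = conj s_{im} s_{0m}`. As `S` commutes with
`S²`, the permutation matrix of `*`, orthogonality reads `∑_i s_{i*m} s_{im} = 1`; multiplying
the previous identity by `s_{im}` and summing yields `conj s_{0m} = |v|² s_{0m}`, so `|v|² = 1`
and `s_{0m}` is real. Hence `s_{i*m} = conj s_{im}`, and orthogonality becomes `Sᴴ S = 1`.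
-/

open Matrix ComplexConjugate

namespace Matrix

variable {n K : Type*} [Fintype n]

theorem submatrix_id_eq_of_submatrix_mul_self_eq_one [DecidableEq n] [Semiring K] {σ : n → n}
    (hσ : Function.Involutive σ) {S : Matrix n n K} (h : S.submatrix σ id * S = 1) :
    S.submatrix id σ = S.submatrix σ id := by
  have hQ : ∀ M : Matrix n n K, (1 : Matrix n n K).submatrix σ id * M = M.submatrix σ id :=
    fun M => by simpa using one_submatrix_mul σ (Equiv.refl n) M
  have hSQ : S * (1 : Matrix n n K).submatrix σ id = S.submatrix id σ := by
    simpa using mul_submatrix_one (hσ.toPerm σ) id S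
  have hSS : S * S = (1 : Matrix n n K).submatrix σ id := by
    rw [← hQ, mul_assoc] at h
    rw [← h, hQ, submatrix_submatrix, hσ.comp_self, Function.comp_id, submatrix_id_id]
  rw [← hQ, ← hSQ, ← hSS, mul_assoc]

theorem eq_star_of_conjTranspose_eq_of_mulVec_eq_smul [Field K] [StarRing K]
    {A B : Matrix n n K} (hAB : Aᴴ = B) {v : n → K} (hv : star v ⬝ᵥ v ≠ 0) {a b : K}
    (hA : A *ᵥ v = a • v) (hB : B *ᵥ v = b • v) : a = star b := by
  apply mul_right_cancel₀ hv
  calc a * (star v ⬝ᵥ v) = star v ⬝ᵥ (A *ᵥ v) := by rw [hA, dotProduct_smul, smul_eq_mul]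
    _ = star (B *ᵥ v) ⬝ᵥ v := by
        rw [dotProduct_mulVec, star_mulVec, ← hAB, conjTranspose_conjTranspose]
    _ = star b * (star v ⬝ᵥ v) := by rw [hB, star_smul, smul_dotProduct, smul_eq_mul]

end Matrix

namespace Complex

theorem conj_eq_self_of_conj_eq_mul_ofReal {c : ℂ} {r : ℝ} (hc : c ≠ 0) (hr : 0 ≤ r)
    (h : conj c = c * r) : conj c = c := by
  have hr1 : r = 1 := by
    have := congrArg norm h
    rw [norm_conj, norm_mul, norm_real, Real.norm_of_nonneg hr] at this
    exact (mul_eq_left₀ (norm_ne_zero_iff.mpr hc)).mp this.symm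
  rw [h, hr1, ofReal_one, mul_one]

theorem conj_eq_self_of_mul_conj_eq_conj_mul {n : Type*} [Fintype n] {v w : n → ℂ}
    {c : ℂ} (hc : c ≠ 0) (hvw : ∀ j, w j * conj c = conj (v j) * c)
    (hwv : ∑ j, w j * v j = 1) : conj c = c := by
  refine conj_eq_self_of_conj_eq_mul_ofReal hc (r := ∑ j, normSq (v j))
    (Finset.sum_nonneg fun j _ => normSq_nonneg _) ?_
  calc conj c = conj c * ∑ j, w j * v j := by rw [hwv, mul_one]
    _ = ∑ j, w j * conj c * v j := by
        rw [Finset.mul_sum]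
        exact Finset.sum_congr rfl fun j _ => by ring
    _ = c * ∑ j, (normSq (v j) : ℂ) := by
        simp only [hvw, Finset.mul_sum, normSq_eq_conj_mul_self]
        exact Finset.sum_congr rfl fun j _ => by ring
    _ = c * ↑(∑ j, normSq (v j)) := by push_cast; rfl

end Complex

theorem eigenvalue_dual_eq_conj {I : Type*} [Fintype I] {σ : I → I}
    (hσ : Function.Involutive σ) {N : I → Matrix I I ℝ} (hNT : ∀ i, (N i)ᵀ = N (σ i))
    {v : I → ℂ} (hv : star v ⬝ᵥ v ≠ 0) {μ : I → ℂ}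
    (hNv : ∀ i, (N i).map (fun x : ℝ => (x : ℂ)) *ᵥ v = μ i • v) (i : I) :
    μ (σ i) = conj (μ i) := by
  refine eq_star_of_conjTranspose_eq_of_mulVec_eq_smul ?_ hv (hNv (σ i)) (hNv i)
  rw [← conjTranspose_map _ fun x => (Complex.conj_ofReal x).symm,
    conjTranspose_eq_transpose_of_trivial, hNT, hσ]

theorem stmt4_general (I : Type*) [Fintype I] [DecidableEq I] (z : I)
    (σ : I → I) (hσ : ∀ i, σ (σ i) = i)
    (S : Matrix I I ℂ)
    (hsym : ∀ i j, S i j = S j i)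
    (horth : ∀ i l, ∑ j, S (σ i) j * S j l = if i = l then 1 else 0)
    (hz : ∀ m, S z m ≠ 0)
    (N : I → Matrix I I ℝ)
    (hNT : ∀ i, (N i).transpose = N (σ i))
    (hVerlinde : ∀ i m,
      ((N i).map (fun x : ℝ => (x : ℂ))).mulVec (fun j => S j m) =
        (S i m / S z m) • fun j => S j m)
    (hcol : ∀ m, (∑ j, Complex.normSq (S j m)) ≠ 0) :
    (∀ i m, S (σ i) m = starRingEnd ℂ (S i m)) ∧ S * S.conjTranspose = 1 := by
  have hS : S.submatrix σ id * S = 1 := by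
    ext i l
    simpa [mul_apply, one_apply] using horth i l
  have hdual : ∀ i m, S (σ i) m * conj (S z m) = conj (S i m) * S z m := by
    intro i m
    have hv : star (fun j => S j m) ⬝ᵥ (fun j => S j m) ≠ 0 := by
      simpa [dotProduct, ← Complex.normSq_eq_conj_mul_self] using mod_cast hcol m
    have := eigenvalue_dual_eq_conj hσ hNT hv (hVerlinde · m) i
    rwa [map_div₀, div_eq_div_iff (hz m) ((map_ne_zero _).mpr (hz m))] at this
  have hcol_one : ∀ m, ∑ j, S (σ j) m * S j m = 1 := by
    intro m
    have hσS : ∀ j, S (σ j) m = S (σ m) j := fun j => by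
      rw [hsym]
      exact congrFun (congrFun (submatrix_id_eq_of_submatrix_mul_self_eq_one hσ hS) m) j
    simp_rw [hσS]
    simpa [mul_apply] using congrFun (congrFun hS m) m
  have hreal : ∀ m, conj (S z m) = S z m := fun m =>
    Complex.conj_eq_self_of_mul_conj_eq_conj_mul (hz m) (hdual · m) (hcol_one m)
  have hconj : ∀ i m, S (σ i) m = conj (S i m) := fun i m =>
    mul_right_cancel₀ (hz m) (by rw [← hreal m, hdual, hreal])
  refine ⟨hconj, ?_⟩
  have hSH : Sᴴ = S.submatrix σ id := by
    ext i j
    rw [conjTranspose_apply, hsym, submatrix_apply, hconj]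
    rfl
  rw [mul_eq_one_comm, hSH, hS]

/-- Unitarity of the S-matrix of a modular category: given the Verlinde-type data
(symmetric `S` with `∑_j s_{i*j} s_{jl} = δ_{il}`, nonnegative real matrices `N i` with
`N iᵀ = N (σ i)`, and columns of `S` as common eigenvectors with eigenvalues
`s_{im}/s_{0m}`), if every column has nonzero norm then `s_{σ(i) j} = conj (s_{ij})` for
all `i, j`, and consequently `S` is unitary. -/
theorem stmt4 (I : Type*) [Fintype I] [DecidableEq I] (z : I)
    (σ : I → I) (hσ : ∀ i, σ (σ i) = i)
    (S : Matrix I I ℂ)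
    (hsym : ∀ i j, S i j = S j i)
    (horth : ∀ i l, ∑ j, S (σ i) j * S j l = if i = l then 1 else 0)
    (hz : ∀ m, S z m ≠ 0)
    (N : I → Matrix I I ℝ)
    (hN : ∀ i j k, 0 ≤ N i j k)
    (hNT : ∀ i, (N i).transpose = N (σ i))
    (hVerlinde : ∀ i m,
      ((N i).map (fun x : ℝ => (x : ℂ))).mulVec (fun j => S j m) =
        (S i m / S z m) • fun j => S j m)
    (hcol : ∀ m, (∑ j, Complex.normSq (S j m)) ≠ 0) :
    (∀ i m, S (σ i) m = starRingEnd ℂ (S i m)) ∧ S * S.conjTranspose = 1 :=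
  stmt4_general I z σ hσ S hsym horth hz N hNT hVerlinde hcol
end

section
/- Let (N_i) be nonnegative integer matrices indexed by a finite set I with 0 ∈ I, an involution * on I with N_i^T = N_{i*}, and suppose d = (d_i) is a nonzero complex vector with d_0 = 1 satisfying N_i d = d_i d for all i. Then conjugate(d_{i*}) = d_i for all i. In particular, in a pivotal fusion category over ℂ, dim(V*) = conjugate(dim(V)) for every simple object V, so |V|² = |dim(V)|². -/
/-!
Since `N i` is real, `N iᵀ = N (σ i)` is its adjoint, so for the common eigenvector `d`
`d (σ i) ‖d‖² = ⟪d, N (σ i) d⟫ = ⟪N i d, d⟫ = conj (d i) ‖d‖²`, and `‖d‖² ≠ 0`.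
-/

namespace Matrix

variable {n R : Type*}

theorem eigenvalue_conjTranspose_eq_star [Fintype n] [CommRing R] [StarRing R] [PartialOrder R]
    [StarOrderedRing R] [NoZeroDivisors R] {M : Matrix n n R} {d : n → R} {a b : R}
    (hd : d ≠ 0) (hM : M *ᵥ d = a • d) (hMH : Mᴴ *ᵥ d = b • d) : b = star a := by
  have hpair : b * (star d ⬝ᵥ d) = star a * (star d ⬝ᵥ d) := by
    calc b * (star d ⬝ᵥ d) = star d ⬝ᵥ (Mᴴ *ᵥ d) := by rw [hMH, dotProduct_smul, smul_eq_mul]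
      _ = star (M *ᵥ d) ⬝ᵥ d := by rw [dotProduct_mulVec, star_mulVec]
      _ = star a * (star d ⬝ᵥ d) := by rw [hM, star_smul, smul_dotProduct, smul_eq_mul]
  exact mul_right_cancel₀ (mt dotProduct_star_self_eq_zero.mp hd) hpair

theorem conjTranspose_map_intCast [Ring R] [StarRing R] (N : Matrix n n ℤ) :
    (N.map (Int.cast : ℤ → R))ᴴ = Nᵀ.map Int.cast := by
  rw [← conjTranspose_eq_transpose_of_trivial,
    conjTranspose_map _ fun x => by rw [star_trivial, star_intCast]]

end Matrix

theorem stmt5_general (I : Type*) [Fintype I]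
    (σ : I → I)
    (N : I → Matrix I I ℤ)
    (hNT : ∀ i, (N i).transpose = N (σ i))
    (d : I → ℂ) (hdne : d ≠ 0)
    (heig : ∀ i, ((N i).map (fun x : ℤ => (x : ℂ))).mulVec d = d i • d) :
    ∀ i, starRingEnd ℂ (d (σ i)) = d i := by
  intro i
  have hdual : ((N i).map (fun x : ℤ => (x : ℂ))).conjTranspose.mulVec d = d (σ i) • d := by
    rw [Matrix.conjTranspose_map_intCast, hNT, heig]
  open scoped ComplexOrder in
  rw [Matrix.eigenvalue_conjTranspose_eq_star hdne (heig i) hdual]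
  exact star_star (d i)

/-- If `(N i)` are nonnegative integer matrices with `N iᵀ = N (σ i)` for an involution
`σ`, and `d` is a nonzero complex common eigenvector with `N i d = d i • d` and `d z = 1`,
then `conj (d (σ i)) = d i` for all `i`.  (In a pivotal fusion category over ℂ this says
`dim(V*) = conj (dim V)`, hence `|V|² = |dim V|²`.) -/
theorem stmt5 (I : Type*) [Fintype I] (z : I)
    (σ : I → I) (hσ : ∀ i, σ (σ i) = i)
    (N : I → Matrix I I ℤ) (hnn : ∀ i j k, 0 ≤ N i j k)
    (hNT : ∀ i, (N i).transpose = N (σ i))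
    (d : I → ℂ) (hd0 : d z = 1) (hdne : d ≠ 0)
    (heig : ∀ i, ((N i).map (fun x : ℤ => (x : ℂ))).mulVec d = d i • d) :
    ∀ i, starRingEnd ℂ (d (σ i)) = d i :=
  stmt5_general I σ N hNT d hdne heig
end

section
/- Let T_i (i ∈ I) be integer matrices, ε_i ∈ {±1}, * an involution on I such that T_{i*} = ε_i T_i^T, and let d be a nonzero complex vector with T_i d = d_i d for each i. Set |X_i|² := ε_i d_i d_{i*}. Then each |X_i|² is a nonnegative real number. (This is the key step proving positivity of squared norms of simple objects in a fusion category over ℂ.) -/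
/-!
Write `A` for `T i` viewed as a complex matrix. Since `A` is real, `Aᴴ = Aᵀ = ε i • T_{i*}`, so
`Aᴴ d = ε i d_{i*} d` and `d` is an eigenvector of the positive semidefinite matrix `A Aᴴ` with
eigenvalue `ε i d_i d_{i*}`, which is therefore a nonnegative real.
-/

open Matrix
open scoped ComplexOrder

theorem Matrix.PosSemidef.nonneg_of_mulVec_eq_smul {n 𝕜 : Type*} [Fintype n] [RCLike 𝕜]
    {M : Matrix n n 𝕜} (hM : M.PosSemidef) {v : n → 𝕜} (hv : v ≠ 0) {c : 𝕜}
    (hc : M *ᵥ v = c • v) : 0 ≤ c := by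
  have hnorm : 0 < star v ⬝ᵥ v :=
    (dotProduct_star_self_nonneg v).lt_of_ne' (dotProduct_star_self_eq_zero.not.mpr hv)
  have hquad : 0 ≤ c * (star v ⬝ᵥ v) := by
    simpa [hc, dotProduct_smul] using hM.dotProduct_mulVec_nonneg v
  simpa [hnorm.ne'] using mul_nonneg hquad (RCLike.inv_pos_of_pos hnorm).le

theorem Matrix.conjTranspose_map_intCast_s6 {m n R : Type*} [Ring R] [StarRing R]
    (A : Matrix m n ℤ) : (A.map (Int.cast : ℤ → R))ᴴ = Aᵀ.map Int.cast := by
  rw [← conjTranspose_map _ fun z => (star_intCast z).symm, conjTranspose_eq_transpose_of_trivial]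

theorem stmt6_general (I : Type*) [Fintype I]
    (σ : I → I)
    (T : I → Matrix I I ℤ)
    (ε : I → ℤ) (hε : ∀ i, ε i = 1 ∨ ε i = -1)
    (hT : ∀ i, T (σ i) = ε i • (T i).transpose)
    (d : I → ℂ) (hdne : d ≠ 0)
    (heig : ∀ i, ((T i).map (fun x : ℤ => (x : ℂ))).mulVec d = d i • d) :
    ∀ i, ∃ r : ℝ, 0 ≤ r ∧ (ε i : ℂ) * (d i * d (σ i)) = (r : ℂ) := by
  intro i
  set A : Matrix I I ℂ := (T i).map (fun x : ℤ => (x : ℂ))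
  have hε_sq : (ε i : ℂ) * ε i = 1 := by rcases hε i with h | h <;> simp [h]
  have hAσ : (T (σ i)).map (fun x : ℤ => (x : ℂ)) = (ε i : ℂ) • Aᴴ := by
    rw [hT, conjTranspose_map_intCast_s6]
    ext
    simp
  have hAH : Aᴴ *ᵥ d = ((ε i : ℂ) * d (σ i)) • d := by
    have h := congrArg ((ε i : ℂ) • ·) (heig (σ i))
    simpa only [hAσ, smul_mulVec, smul_smul, hε_sq, one_smul] using h
  have hAAH : (A * Aᴴ) *ᵥ d = ((ε i : ℂ) * (d i * d (σ i))) • d := by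
    rw [← mulVec_mulVec, hAH, mulVec_smul, heig i, smul_smul]
    congr 1
    ring
  obtain ⟨r, hr, hr_eq⟩ := RCLike.nonneg_iff_exists_ofReal.mp
    ((posSemidef_self_mul_conjTranspose A).nonneg_of_mulVec_eq_smul hdne hAAH)
  exact ⟨r, hr, hr_eq.symm⟩

/-- Key step of positivity of squared norms in a fusion category over ℂ: given integer
matrices `T i`, signs `ε i = ±1` with `ε i * ε (σ i) = 1` and `T (σ i) = ε i • (T i)ᵀ`,
and a nonzero complex vector `d` with `T i d = d i • d`, each squared norm
`|X_i|² = ε i * d i * d (σ i)` is a nonnegative real number. -/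
theorem stmt6 (I : Type*) [Fintype I]
    (σ : I → I) (hσ : ∀ i, σ (σ i) = i)
    (T : I → Matrix I I ℤ)
    (ε : I → ℤ) (hε : ∀ i, ε i = 1 ∨ ε i = -1) (hεinv : ∀ i, ε i * ε (σ i) = 1)
    (hT : ∀ i, T (σ i) = ε i • (T i).transpose)
    (d : I → ℂ) (hdne : d ≠ 0)
    (heig : ∀ i, ((T i).map (fun x : ℤ => (x : ℂ))).mulVec d = d i • d) :
    ∀ i, ∃ r : ℝ, 0 ≤ r ∧ (ε i : ℂ) * (d i * d (σ i)) = (r : ℂ) :=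
  stmt6_general I σ T ε hε hT d hdne heig
end

section
/- Let B be a square matrix with strictly positive real entries satisfying B² = c·B for some real c > 0. Then B has rank 1 and Tr(B) = c. -/
/-!
Every column of `B` is an eigenvector of `B` for the eigenvalue `c`, and these eigenvectors are
positive. For a positive matrix such an eigenvector is unique up to scaling, so all columns are
proportional: `B = u tᵀ`. Hence `B` has rank one and `B² = (tr B) B`, which forces `tr B = c`.
-/

open Matrix

theorem eq_zero_of_dotProduct_eq_zero_of_pos {n K : Type*} [Fintype n] [Field K] [LinearOrder K]
    [IsStrictOrderedRing K] {a w : n → K} (ha : ∀ j, 0 < a j) (hw : 0 ≤ w) (h : a ⬝ᵥ w = 0) :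
    w = 0 := by
  have hterms := (Finset.sum_eq_zero_iff_of_nonneg fun j _ => mul_nonneg (ha j).le (hw j)).mp h
  funext j
  exact (mul_eq_zero.mp (hterms j (Finset.mem_univ j))).resolve_left (ha j).ne'

namespace Matrix

theorem exists_eq_smul_of_mulVec_eq_smul_s9 {n K : Type*} [Fintype n] [Field K] [LinearOrder K]
    [IsStrictOrderedRing K] {A : Matrix n n K} (hA : ∀ i j, 0 < A i j) {c : K} {u v : n → K}
    (hu : ∀ i, 0 < u i) (hAu : A *ᵥ u = c • u) (hAv : A *ᵥ v = c • v) :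
    ∃ t : K, v = t • u := by
  rcases isEmpty_or_nonempty n with hn | hn
  · exact ⟨0, Subsingleton.elim _ _⟩
  -- `w = v - t u` with `t` the largest admissible scale is a nonnegative eigenvector with a zero
  -- entry; positivity of that row of `A` then forces `w = 0`.
  obtain ⟨i₀, -, hmin⟩ := Finset.univ.exists_min_image (fun i => v i / u i) Finset.univ_nonempty
  set t := v i₀ / u i₀
  set w := v - t • u
  have hw : 0 ≤ w := fun i => by
    simpa [w, sub_nonneg] using (le_div_iff₀ (hu i)).mp (hmin i (Finset.mem_univ i))
  have hw₀ : w i₀ = 0 := by simp [w, t, div_mul_cancel₀ _ (hu i₀).ne']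
  have hAw : A *ᵥ w = c • w := by
    simp only [w, mulVec_sub, mulVec_smul, hAu, hAv, smul_sub, smul_comm c t]
  have hw_zero : w = 0 := eq_zero_of_dotProduct_eq_zero_of_pos (hA i₀) hw <| by
    change (A *ᵥ w) i₀ = 0
    rw [hAw, Pi.smul_apply, hw₀, smul_zero]
  exact ⟨t, sub_eq_zero.mp hw_zero⟩

theorem mulVec_col_of_mul_self_eq_smul {n R : Type*} [Fintype n] [CommSemiring R]
    {B : Matrix n n R} {c : R} (hB : B * B = c • B) (j : n) : B *ᵥ B.col j = c • B.col j := by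
  funext i
  simpa [mulVec, dotProduct, mul_apply] using congrFun (congrFun hB i) j

theorem exists_eq_vecMulVec_col_of_mul_self_eq_smul {n K : Type*} [Fintype n] [Field K]
    [LinearOrder K] [IsStrictOrderedRing K] {B : Matrix n n K} (hB : ∀ i j, 0 < B i j) {c : K}
    (hBB : B * B = c • B) (z : n) : ∃ t : n → K, B = vecMulVec (B.col z) t := by
  choose t ht using fun j => exists_eq_smul_of_mulVec_eq_smul_s9 hB (hB · z)
    (mulVec_col_of_mul_self_eq_smul hBB z) (mulVec_col_of_mul_self_eq_smul hBB j)
  exact ⟨t, ext fun i j => (congrFun (ht j) i).trans (mul_comm _ _)⟩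

theorem rank_eq_zero_iff {m n K : Type*} [Fintype n] [Field K] {A : Matrix m n K} :
    A.rank = 0 ↔ A = 0 := by
  classical
  rw [rank, Submodule.finrank_eq_zero, LinearMap.range_eq_bot, ← toLin'_apply',
    LinearEquiv.map_eq_zero_iff]

theorem rank_vecMulVec_of_ne_zero {m n K : Type*} [Fintype n] [Field K] {u : m → K} {v : n → K}
    (h : vecMulVec u v ≠ 0) : (vecMulVec u v).rank = 1 :=
  le_antisymm (rank_vecMulVec_le u v) (Nat.one_le_iff_ne_zero.mpr (mt rank_eq_zero_iff.mp h))

theorem vecMulVec_mul_self {n R : Type*} [Fintype n] [CommSemiring R] (u v : n → R) :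
    vecMulVec u v * vecMulVec u v = (vecMulVec u v).trace • vecMulVec u v := by
  rw [vecMulVec_mul_vecMulVec, trace_vecMulVec, vecMulVec_smul, dotProduct_comm]

end Matrix

theorem stmt9_general (r : ℕ) (hr : 0 < r) (B : Matrix (Fin r) (Fin r) ℝ)
    (hpos : ∀ i j, 0 < B i j)
    (c : ℝ) (hB : B * B = c • B) :
    B.rank = 1 ∧ B.trace = c := by
  let z : Fin r := ⟨0, hr⟩
  obtain ⟨t, ht⟩ := exists_eq_vecMulVec_col_of_mul_self_eq_smul hpos hB z
  have hne : B ≠ 0 := fun h => (hpos z z).ne' (by simp [h])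
  refine ⟨ht ▸ rank_vecMulVec_of_ne_zero (ht ▸ hne), smul_left_injective ℝ hne ?_⟩
  change B.trace • B = c • B
  rw [← hB, ht, vecMulVec_mul_self]

/-- A square matrix with strictly positive real entries satisfying `B² = c • B` with
`c > 0` has rank 1 and trace `c`. -/
theorem stmt9 (r : ℕ) (hr : 0 < r) (B : Matrix (Fin r) (Fin r) ℝ)
    (hpos : ∀ i j, 0 < B i j)
    (c : ℝ) (hc : 0 < c) (hB : B * B = c • B) :
    B.rank = 1 ∧ B.trace = c :=
  stmt9_general r hr B hpos c hB
end

section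
/- Let T_i be integer matrices indexed by a finite set I, and f = (f_i) a vector of positive reals with Σ_j f_j |(T_i)_{jk}| ≤ f_i f_k for all i, k (entrywise domination by a Frobenius-Perron system). Then for any eigenvalue μ of T_i one has |μ| ≤ f_i. In particular the squared norm |V|² of a simple object V in a fusion category over ℂ satisfies |V|² ≤ FPdim(V)². -/
/-!
The weighted ℓ¹ norm `‖a‖_f = ∑ j, f j * ‖a j‖` on `I → ℂ` satisfies `‖T i a‖_f ≤ f i * ‖a‖_f`,
because the domination hypothesis says exactly that the `f`-weighted column sums of `|T i|` are
at most `f i * f k`. Evaluated on an eigenvector this gives `‖μ‖ * ‖v‖_f ≤ f i * ‖v‖_f`, and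
`‖v‖_f > 0` since all weights are positive.
-/

open Finset Matrix

namespace Matrix

variable {m n R : Type*} [Fintype m] [Fintype n]

theorem sum_mul_norm_mulVec_le [SeminormedRing R] (A : Matrix m n R) (v : n → R)
    {w : m → ℝ} {w' : n → ℝ} {c : ℝ} (hw : ∀ j, 0 ≤ w j)
    (hcol : ∀ k, ∑ j, w j * ‖A j k‖ ≤ c * w' k) :
    ∑ j, w j * ‖(A *ᵥ v) j‖ ≤ c * ∑ k, w' k * ‖v k‖ :=
  calc ∑ j, w j * ‖(A *ᵥ v) j‖ ≤ ∑ j, w j * ∑ k, ‖A j k‖ * ‖v k‖ := by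
        gcongr with j _
        · exact hw j
        exact (norm_sum_le _ _).trans (sum_le_sum fun k _ => norm_mul_le _ _)
    _ = ∑ k, (∑ j, w j * ‖A j k‖) * ‖v k‖ := by
        simp only [mul_sum, sum_mul, mul_assoc]
        exact sum_comm
    _ ≤ ∑ k, c * w' k * ‖v k‖ := by gcongr with k _; exact hcol k
    _ = c * ∑ k, w' k * ‖v k‖ := by simp only [mul_sum, mul_assoc]

theorem norm_le_of_mulVec_eq_smul [NormedDivisionRing R] {A : Matrix n n R} {v : n → R}
    {μ : R} (hv : v ≠ 0) (hμ : A *ᵥ v = μ • v) {w : n → ℝ} {c : ℝ} (hw : ∀ j, 0 < w j)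
    (hcol : ∀ k, ∑ j, w j * ‖A j k‖ ≤ c * w k) : ‖μ‖ ≤ c := by
  have hpos : 0 < ∑ j, w j * ‖v j‖ := by
    obtain ⟨j, hj⟩ := Function.ne_iff.mp hv
    exact sum_pos' (fun j _ => mul_nonneg (hw j).le (norm_nonneg _))
      ⟨j, mem_univ j, mul_pos (hw j) (norm_pos_iff.mpr hj)⟩
  refine le_of_mul_le_mul_right ?_ hpos
  calc ‖μ‖ * ∑ j, w j * ‖v j‖ = ∑ j, w j * ‖(A *ᵥ v) j‖ := by
        simp only [hμ, Pi.smul_apply, smul_eq_mul, norm_mul, mul_sum]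
        exact sum_congr rfl fun j _ => by ring
    _ ≤ c * ∑ j, w j * ‖v j‖ := sum_mul_norm_mulVec_le A v (fun j => (hw j).le) hcol

end Matrix

/-- Spectral radius bound: if `T i` are integer matrices and `f` is a vector of positive
reals with `∑ j, f j * |(T i)_{jk}| ≤ f i * f k` for all `i, k`, then every complex
eigenvalue `μ` of `T i` satisfies `|μ| ≤ f i`.  (Hence `|V|² ≤ FPdim(V)²` for simple
objects of a fusion category over ℂ.) -/
theorem stmt11 (I : Type*) [Fintype I]
    (T : I → Matrix I I ℤ)
    (f : I → ℝ) (hf : ∀ i, 0 < f i)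
    (hdom : ∀ i k, ∑ j, f j * |((T i j k : ℤ) : ℝ)| ≤ f i * f k) :
    ∀ (i : I) (μ : ℂ),
      (∃ v : I → ℂ, v ≠ 0 ∧ ((T i).map (fun x : ℤ => (x : ℂ))).mulVec v = μ • v) →
      ‖μ‖ ≤ f i := by
  rintro i μ ⟨v, hv, hμ⟩
  refine norm_le_of_mulVec_eq_smul hv hμ hf fun k => ?_
  simpa only [map_apply, Complex.norm_intCast] using hdom i k
end

section
/- Let D ≥ 1 be a real number that is the global dimension of a modular category over ℂ with Virasoro central charge c, so that sign(s_{00}) e^{πic/4} = Σ_i |X_i|² θ_i / √D with |θ_i| = 1, |X_0|² = 1, and all |X_i|² > 0 summing to D. Then |sign(s_{00}) e^{πic/4} − D^{−1/2}|² ≤ (D−1)²/D, and consequently sign(s_{00}) cos(πc/4) ≥ (3 − D)√D / 2. -/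
/-!
The summand `i = 0` of the Gaussian sum contributes exactly `D^{-1/2}`, and the remaining
summands have total modulus at most `∑_{i ≠ 0} |X_i|² = D - 1`; this is the distance bound.
Since `w = s·e^{πic/4}` lies on the unit circle, `|w - D^{-1/2}|² = 1 + 1/D - 2 Re w / √D`,
so the distance bound is a lower bound on `Re w = s·cos(πc/4)`.
-/

open Complex

theorem norm_sum_ofReal_mul_le {ι : Type*} (t : Finset ι) {x : ι → ℝ} {θ : ι → ℂ}
    (hx : ∀ i ∈ t, 0 ≤ x i) (hθ : ∀ i ∈ t, ‖θ i‖ ≤ 1) :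
    ‖∑ i ∈ t, (x i : ℂ) * θ i‖ ≤ ∑ i ∈ t, x i := by
  refine (norm_sum_le _ _).trans (Finset.sum_le_sum fun i hi => ?_)
  rw [norm_mul, norm_real, Real.norm_of_nonneg (hx i hi)]
  exact mul_le_of_le_one_right (hx i hi) (hθ i hi)

theorem norm_sum_ofReal_mul_sub_le {ι : Type*} [Fintype ι] (z : ι) {x : ι → ℝ} {θ : ι → ℂ}
    (hx : ∀ i, 0 ≤ x i) (hθ : ∀ i, ‖θ i‖ ≤ 1) :
    ‖∑ i, (x i : ℂ) * θ i - x z * θ z‖ ≤ ∑ i, x i - x z := by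
  classical
  rw [← Finset.sum_erase_eq_sub (Finset.mem_univ z), ← Finset.sum_erase_eq_sub (Finset.mem_univ z)]
  exact norm_sum_ofReal_mul_le _ (fun i _ => hx i) (fun i _ => hθ i)

theorem sq_norm_div_sqrt_sub_inv_sqrt_le {S : ℂ} {D : ℝ} (hD : 0 < D) (hS : ‖S - 1‖ ≤ D - 1) :
    ‖S / (Real.sqrt D : ℂ) - 1 / (Real.sqrt D : ℂ)‖ ^ 2 ≤ (D - 1) ^ 2 / D := by
  rw [← sub_div, norm_div, norm_real, Real.norm_of_nonneg (Real.sqrt_nonneg D), div_pow,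
    Real.sq_sqrt hD.le]
  gcongr

theorem sq_norm_sub_ofReal_of_norm_eq_one {w : ℂ} (hw : ‖w‖ = 1) (r : ℝ) :
    ‖w - r‖ ^ 2 = 1 + r ^ 2 - 2 * r * w.re := by
  rw [Complex.sq_norm, normSq_sub, ← Complex.sq_norm, hw, normSq_ofReal, conj_ofReal,
    mul_comm w, re_ofReal_mul]
  ring

theorem le_re_of_sq_norm_sub_inv_sqrt_le {w : ℂ} {D : ℝ} (hD : 0 < D) (hw : ‖w‖ = 1)
    (h : ‖w - 1 / (Real.sqrt D : ℂ)‖ ^ 2 ≤ (D - 1) ^ 2 / D) :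
    (3 - D) * Real.sqrt D / 2 ≤ w.re := by
  obtain ⟨u, hu, rfl⟩ : ∃ u : ℝ, 0 < u ∧ u ^ 2 = D := ⟨_, Real.sqrt_pos.2 hD, Real.sq_sqrt hD.le⟩
  rw [Real.sqrt_sq hu.le, ← ofReal_one, ← ofReal_div, sq_norm_sub_ofReal_of_norm_eq_one hw] at h
  rw [Real.sqrt_sq hu.le]
  have key : u ^ 2 + 1 - 2 * u * w.re ≤ (u ^ 2 - 1) ^ 2 := by
    have := mul_le_mul_of_nonneg_right h (sq_nonneg u)
    field_simp at this
    linarith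
  nlinarith

/-- Bound on the global dimension of a modular category in terms of its Virasoro central
charge: from the Gaussian sum expression `s·e^{πic/4} = ∑ |X_i|² θ_i / √D` with `|θ_i|=1`,
`θ_0 = 1`, `|X_0|² = 1`, `|X_i|² > 0`, `∑ |X_i|² = D ≥ 1`, one gets
`|s·e^{πic/4} − D^{−1/2}|² ≤ (D−1)²/D` and hence `s·cos(πc/4) ≥ (3−D)√D/2`. -/
theorem stmt15 (I : Type*) [Fintype I] (z : I)
    (D : ℝ) (hD : 1 ≤ D)
    (θ : I → ℂ) (hθ : ∀ i, ‖θ i‖ = 1) (hθ0 : θ z = 1)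
    (x : I → ℝ) (hx : ∀ i, 0 < x i) (hx0 : x z = 1) (hsum : ∑ i, x i = D)
    (s : ℝ) (hs : s = 1 ∨ s = -1)
    (c : ℝ)
    (hgauss : (s : ℂ) * Complex.exp (Real.pi * c / 4 * Complex.I) =
      (∑ i, (x i : ℂ) * θ i) / (Real.sqrt D : ℂ)) :
    ‖(s : ℂ) * Complex.exp (Real.pi * c / 4 * Complex.I)
        - (1 / (Real.sqrt D : ℂ))‖ ^ 2 ≤ (D - 1) ^ 2 / D ∧
    s * Real.cos (Real.pi * c / 4) ≥ (3 - D) * Real.sqrt D / 2 := by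
  have hD0 : 0 < D := one_pos.trans_le hD
  have harg : (Real.pi * c / 4 * Complex.I : ℂ) = ((Real.pi * c / 4 : ℝ) : ℂ) * Complex.I := by push_cast; ring
  have hunit : ‖(s : ℂ) * exp (Real.pi * c / 4 * Complex.I)‖ = 1 := by
    rw [harg, norm_mul, norm_exp_ofReal_mul_I, norm_real]
    rcases hs with rfl | rfl <;> norm_num
  have hrest : ‖∑ i, (x i : ℂ) * θ i - 1‖ ≤ D - 1 := by
    simpa [hθ0, hx0, hsum] using
      norm_sum_ofReal_mul_sub_le z (fun i => (hx i).le) (fun i => (hθ i).le)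
  have hdist := hgauss ▸ sq_norm_div_sqrt_sub_inv_sqrt_le hD0 hrest
  refine ⟨hdist, ?_⟩
  have hre := le_re_of_sq_norm_sub_inv_sqrt_le hD0 hunit hdist
  rwa [harg, re_ofReal_mul, exp_ofReal_mul_I_re] at hre
end

section
/- Let G be a finite abelian group and I a finite set with 0 ∈ I of size 1 + |G| (elements of G together with one extra element X). Consider the based ring with basis G ∪ {X}, multiplication the group law on G, g·X = X·g = X for g ∈ G, and X² = nX + Σ_{g∈G} g for a nonnegative integer n. Then the largest root x of x² = n x + |G| satisfies: x²/|G| is an algebraic integer if and only if (n + √(n²+4|G|))²/(4|G|) is an algebraic integer; and if n = 1 and this holds, then |G| ≤ 2. -/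
/-!
For `n = 1` we have `x² = x + m` with `m = |G|`, so `β = x² / m - 1 = x / m` is an algebraic
integer with `m β² = β + 1`. The minimal polynomial of `β` over `ℤ` divides `m X² - X - 1`.
If it has degree one, `β` is an integer dividing `1`, whence `m ∈ {0, 2}`; if it has degree two,
`m X² - X - 1` is `m` times a monic integer polynomial, so `m ∣ 1`.
-/

open Polynomial

theorem sq_eq_mul_add_of_eq_add_sqrt_div_two {n c x : ℝ} (hc : 0 ≤ n ^ 2 + 4 * c)
    (hx : x = (n + √(n ^ 2 + 4 * c)) / 2) : x ^ 2 = n * x + c := by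
  have hsq := Real.sq_sqrt hc
  rw [hx]
  linear_combination hsq / 4

theorem minpoly.mem_range_or_eq_mul_C_of_natDegree_eq_two {R S : Type*} [CommRing R]
    [CommRing S] [IsDomain R] [IsIntegrallyClosed R] [IsDomain S] [Algebra R S]
    [Module.IsTorsionFree R S] {s : S} (hs : IsIntegral R s) {g : R[X]} (hg : g.natDegree = 2)
    (hgs : Polynomial.aeval s g = 0) :
    s ∈ (algebraMap R S).range ∨ g = minpoly R s * C g.leadingCoeff := by
  have hdvd : minpoly R s ∣ g := minpoly.isIntegrallyClosed_dvd hs hgs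
  have hg0 : g ≠ 0 := by rintro rfl; simp at hg
  have hle : (minpoly R s).natDegree ≤ 2 := hg ▸ natDegree_le_of_dvd hdvd hg0
  have hpos : 0 < (minpoly R s).natDegree := minpoly.natDegree_pos hs
  interval_cases hd : (minpoly R s).natDegree
  · exact .inl (minpoly.natDegree_eq_one_iff.mp hd)
  · exact .inr (eq_mul_leadingCoeff_of_monic_of_dvd_of_natDegree_le (minpoly.monic hs) hdvd
      (by rw [hg, hd]))

theorem Int.le_two_of_mul_sq_eq_add_one {m b : ℤ} (h : m * b ^ 2 = b + 1) : m ≤ 2 := by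
  have hb : b * (m * b - 1) = 1 := by linear_combination h
  rcases Int.eq_one_or_neg_one_of_mul_eq_one hb with rfl | rfl <;> linarith

theorem le_two_of_isIntegral_of_mul_sq_eq_add_one {K : Type*} [Field K] [CharZero K] {m : ℕ}
    {β : K} (hβ : IsIntegral ℤ β) (h : m * β ^ 2 = β + 1) : m ≤ 2 := by
  rcases Nat.eq_zero_or_pos m with rfl | hm
  · omega
  set g : ℤ[X] := C (m : ℤ) * X ^ 2 - X - 1
  have hgdeg : g.natDegree = 2 := by
    unfold g; compute_degree!; exact_mod_cast hm.ne'
  have hgβ : Polynomial.aeval β g = 0 := by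
    simp only [g, map_sub, map_mul, map_pow, map_natCast, aeval_X, map_one]
    linear_combination h
  rcases minpoly.mem_range_or_eq_mul_C_of_natDegree_eq_two hβ hgdeg hgβ with ⟨b, rfl⟩ | hg
  · simp only [algebraMap_int_eq, eq_intCast] at h
    exact_mod_cast Int.le_two_of_mul_sq_eq_add_one (m := m) (b := b) (by exact_mod_cast h)
  · have hlead : g.leadingCoeff = m := by
      rw [leadingCoeff, hgdeg]; simp [g, coeff_X, coeff_one]
    have hconst : (minpoly ℤ β).coeff 0 * m = -1 := by
      rw [hlead] at hg
      simpa [g] using (congrArg (coeff · 0) hg).symm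
    have : (m : ℤ) ∣ 1 := ⟨-(minpoly ℤ β).coeff 0, by linarith⟩
    have := Int.le_of_dvd one_pos this
    omega

theorem stmt19_general (G : Type*) [Fintype G] (n : ℕ)
    (x : ℝ)
    (hx : x = ((n : ℝ) + Real.sqrt ((n : ℝ) ^ 2 + 4 * (Fintype.card G : ℝ))) / 2) :
    (IsIntegral ℤ (x ^ 2 / (Fintype.card G : ℝ)) ↔
      IsIntegral ℤ (((n : ℝ) + Real.sqrt ((n : ℝ) ^ 2 + 4 * (Fintype.card G : ℝ))) ^ 2 /
        (4 * (Fintype.card G : ℝ)))) ∧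
    (n = 1 → IsIntegral ℤ (x ^ 2 / (Fintype.card G : ℝ)) → Fintype.card G ≤ 2) := by
  set m := Fintype.card G
  refine ⟨by rw [hx]; ring_nf, ?_⟩
  rintro rfl hint
  by_cases hm0 : m = 0
  · omega
  have hm : (m : ℝ) ≠ 0 := by exact_mod_cast hm0
  have hx2 : x ^ 2 = x + m := by
    simpa using sq_eq_mul_add_of_eq_add_sqrt_div_two (by positivity) hx
  refine le_two_of_isIntegral_of_mul_sq_eq_add_one (hint.sub isIntegral_one) ?_
  field_simp
  linear_combination (x ^ 2 + x - m) * hx2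

/-- For the Tambara–Yamagami-type based ring `A_n(G)` of a finite abelian group `G`
(with `X² = n·X + ∑_{g∈G} g`), the Frobenius–Perron dimension of `X` is the largest root
`x = (n + √(n²+4|G|))/2` of `x² = n·x + |G|`; `x²/|G|` is an algebraic integer iff
`(n + √(n²+4|G|))²/(4|G|)` is, and if `n = 1` and this holds then `|G| ≤ 2`. -/
theorem stmt19 (G : Type*) [CommGroup G] [Fintype G] (n : ℕ)
    (x : ℝ)
    (hx : x = ((n : ℝ) + Real.sqrt ((n : ℝ) ^ 2 + 4 * (Fintype.card G : ℝ))) / 2) :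
    (IsIntegral ℤ (x ^ 2 / (Fintype.card G : ℝ)) ↔
      IsIntegral ℤ (((n : ℝ) + Real.sqrt ((n : ℝ) ^ 2 + 4 * (Fintype.card G : ℝ))) ^ 2 /
        (4 * (Fintype.card G : ℝ)))) ∧
    (n = 1 → IsIntegral ℤ (x ^ 2 / (Fintype.card G : ℝ)) → Fintype.card G ≤ 2) :=
  stmt19_general G n x hx
end
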